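/- Let (X, 𝒜, μ) be a probability space and f_n : X → (0, ∞) a sequence of integrable functions. Then for μ-almost every x ∈ X, limsup_{n→∞} (1/n) log f_n(x) ≤ limsup_{n→∞} (1/n) log ∫_X f_n dμ. -/
import Mathlib


open MeasureTheory Filter

lemma aux_key {X : Type*} [MeasurableSpace X] (μ : Measure X) [IsProbabilityMeasure μ]
    (f : ℕ → X → ℝ) (hpos : ∀ n x, 0 < f n x) (hint : ∀ n, Integrable (f n) μ)
    (c d : ℝ) (hcd : c < d)
    (hL : limsup (fun n : ℕ => ((Real.log (∫ y, f n y ∂μ) / n : ℝ) : EReal)) atTop < (c : EReal)) :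
    ∀ᵐ x ∂μ, limsup (fun n : ℕ => ((Real.log (f n x) / n : ℝ) : EReal)) atTop ≤ (d : EReal) := by
  set I : ℕ → ℝ := fun n => ∫ y, f n y ∂μ with hI
  have hIpos : ∀ n, 0 < I n := by
    intro n
    refine (integral_pos_iff_support_of_nonneg (fun x => (hpos n x).le) (hint n)).mpr ?_
    have : Function.support (f n) = Set.univ := by
      ext x; simp [Function.mem_support, (hpos n x).ne']
    rw [this]; simp
  -- eventually the integrals are bounded by exp (c * n)
  have hev : ∀ᶠ n : ℕ in atTop, ((Real.log (I n) / n : ℝ) : EReal) < (c : EReal) :=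
    eventually_lt_of_limsup_lt hL
  obtain ⟨N, hN⟩ := (hev.and (eventually_ge_atTop 1)).exists_forall_of_atTop
  have hIb : ∀ n ≥ N, I n ≤ Real.exp (c * n) := by
    intro n hn
    obtain ⟨h1, h2⟩ := hN n hn
    have hn0 : (0:ℝ) < (n:ℝ) := by exact_mod_cast h2
    have : Real.log (I n) / n < c := by exact_mod_cast h1
    have hlog : Real.log (I n) < c * n := by
      have := (div_lt_iff₀ hn0).mp this; linarith
    have h := (Real.exp_lt_exp.mpr hlog).le
    rwa [Real.exp_log (hIpos n)] at h
  -- the bad sets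
  set s : ℕ → Set X := fun n => {x | Real.exp (d * n) ≤ f n x} with hs
  set b : ℕ → ℝ := fun n => I n * Real.exp (-(d * n)) with hb
  have hbnonneg : ∀ n, 0 ≤ b n := fun n => mul_nonneg (hIpos n).le (Real.exp_nonneg _)
  have hmeas : ∀ n, (μ (s n)).toReal ≤ b n := by
    intro n
    have hmark := mul_meas_ge_le_integral_of_nonneg
      (μ := μ) (Eventually.of_forall fun x => (hpos n x).le) (hint n) (Real.exp (d * n))
    have he : (0:ℝ) < Real.exp (d * n) := Real.exp_pos _
    show (μ (s n)).toReal ≤ I n * Real.exp (-(d * (n:ℝ)))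
    rw [Real.exp_neg]
    calc (μ (s n)).toReal ≤ I n / Real.exp (d * n) := (le_div_iff₀' he).mpr hmark
      _ = I n * (Real.exp (d * n))⁻¹ := div_eq_mul_inv _ _
  have hbsum : Summable b := by
    rw [← summable_nat_add_iff N]
    have hr0 : (0:ℝ) ≤ Real.exp (c - d) := Real.exp_nonneg _
    have hr1 : Real.exp (c - d) < 1 := Real.exp_lt_one_iff.mpr (by linarith)
    refine Summable.of_nonneg_of_le (fun n => hbnonneg _)
      (fun n => ?_) (((summable_geometric_of_lt_one hr0 hr1).mul_left (Real.exp (c - d) ^ N)))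
    have hkey : b (n + N) ≤ Real.exp (c - d) ^ (n + N) := by
      have hle : b (n + N) ≤ Real.exp (c * ((n + N : ℕ) : ℝ)) * Real.exp (-(d * ((n + N : ℕ) : ℝ))) :=
        mul_le_mul_of_nonneg_right (hIb (n + N) (by omega)) (Real.exp_nonneg _)
      refine hle.trans (le_of_eq ?_)
      rw [← Real.exp_add, ← Real.exp_nat_mul]
      congr 1; ring
    refine hkey.trans (le_of_eq ?_)
    rw [pow_add, mul_comm]
  have hsum : (∑' n, μ (s n)) ≠ ⊤ := by
    have : (∑' n, μ (s n)) ≤ ∑' n, ENNReal.ofReal (b n) := by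
      refine ENNReal.tsum_le_tsum fun n => ?_
      have hfin : μ (s n) ≠ ⊤ := measure_ne_top μ _
      conv_lhs => rw [← ENNReal.ofReal_toReal hfin]
      exact ENNReal.ofReal_le_ofReal (hmeas n)
    refine ne_top_of_le_ne_top ?_ this
    rw [← ENNReal.ofReal_tsum_of_nonneg hbnonneg hbsum]
    exact ENNReal.ofReal_ne_top
  filter_upwards [ae_eventually_notMem hsum] with x hx
  refine limsup_le_of_le ?_ ?_
  · isBoundedDefault
  filter_upwards [hx, eventually_ge_atTop 1] with n hn hn1
  have hn0 : (0:ℝ) < (n:ℝ) := by exact_mod_cast hn1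
  have hfx : f n x < Real.exp (d * n) := lt_of_not_ge hn
  have hlog : Real.log (f n x) < d * n := by
    have := Real.log_lt_log (hpos n x) hfx
    rwa [Real.log_exp] at this
  have : Real.log (f n x) / n ≤ d := by
    rw [div_le_iff₀ hn0]; linarith [mul_comm d (n:ℝ)]
  exact_mod_cast EReal.coe_le_coe_iff.mpr this

theorem stmt0 {X : Type*} [MeasurableSpace X] (μ : Measure X) [IsProbabilityMeasure μ]
    (f : ℕ → X → ℝ) (hpos : ∀ n x, 0 < f n x) (hint : ∀ n, Integrable (f n) μ) :
    ∀ᵐ x ∂μ, limsup (fun n : ℕ => ((Real.log (f n x) / n : ℝ) : EReal)) atTop ≤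
      limsup (fun n : ℕ => ((Real.log (∫ y, f n y ∂μ) / n : ℝ) : EReal)) atTop := by
  set L := limsup (fun n : ℕ => ((Real.log (∫ y, f n y ∂μ) / n : ℝ) : EReal)) atTop with hLdef
  rcases eq_top_or_lt_top L with hL | hL
  · rw [hL]; exact Eventually.of_forall fun x => le_top
  have key : ∀ q : ℚ, L < ((q:ℝ):EReal) →
      ∀ᵐ x ∂μ, limsup (fun n : ℕ => ((Real.log (f n x) / n : ℝ) : EReal)) atTop ≤ ((q:ℝ) : EReal) := by
    intro q hq
    obtain ⟨c, hc1, hc2⟩ := EReal.exists_rat_btwn_of_lt hq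
    exact aux_key μ f hpos hint c q (by exact_mod_cast hc2) hc1
  have key2 : ∀ᵐ x ∂μ, ∀ q : ℚ, L < ((q:ℝ):EReal) →
      limsup (fun n : ℕ => ((Real.log (f n x) / n : ℝ) : EReal)) atTop ≤ ((q:ℝ) : EReal) := by
    rw [ae_all_iff]
    intro q
    by_cases h : L < ((q:ℝ):EReal)
    · exact (key q h).mono fun x hx _ => hx
    · exact Eventually.of_forall fun x hq => absurd hq h
  filter_upwards [key2] with x hx
  by_contra hcon
  push_neg at hcon
  obtain ⟨q, hq1, hq2⟩ := EReal.exists_rat_btwn_of_lt hcon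
  exact absurd (hx q hq1) (not_le.mpr hq2)
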